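/- arXiv:2604.13043 — 6 statements merged into one kernel-verified Lean document; each statement's English description precedes it below -/
import Mathlib

section
/- If β ≥ β_K := (1−η)^{α−1}/Γ(α), then K(t,s) ≥ 0 for all (t,s) ∈ [0,1]×[0,1]. -/
open Set MeasureTheory

/-- The Green's function `K(t,s) = β + ((η−s)^{α−1}/Γ(α))·χ_{[0,η]}(s) −
((t−s)^{α−1}/Γ(α))·χ_{[0,t]}(s)`. -/
noncomputable def Kker (α η β t s : ℝ) : ℝ :=
  β + (Set.Icc (0:ℝ) η).indicator (fun x => (η - x) ^ (α - 1) / Real.Gamma α) s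
    - (Set.Icc (0:ℝ) t).indicator (fun x => (t - x) ^ (α - 1) / Real.Gamma α) s

/-- The function `γ(t) = β/Γ(3−α) + η − t`. -/
noncomputable def gam (α η β t : ℝ) : ℝ := β / Real.Gamma (3 - α) + η - t

/-!
With `p = α - 1 ∈ (0, 1]`, each truncated kernel term is `(max (t - s) 0) ^ p / Γ(α)`, since
`0 ^ p = 0`. As `max (t - s) 0 ≤ max (η - s) 0 + (1 - η)` for `t ≤ 1`, monotonicity and
subadditivity of `x ↦ x ^ p` bound the subtracted term by the added one plus `β_K ≤ β`.
-/

lemma indicator_Icc_rpow_sub_eq {p c t s : ℝ} (hp : p ≠ 0) (hs : 0 ≤ s) :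
    (Icc 0 t).indicator (fun x => (t - x) ^ p / c) s = max (t - s) 0 ^ p / c := by
  by_cases hst : s ≤ t
  · rw [indicator_of_mem (mem_Icc.mpr ⟨hs, hst⟩), max_eq_left (sub_nonneg.mpr hst)]
  · rw [indicator_of_notMem fun h => hst h.2, max_eq_right (by linarith),
      Real.zero_rpow hp, zero_div]

lemma rpow_max_sub_le_add {p t u d s : ℝ} (hp0 : 0 ≤ p) (hp1 : p ≤ 1) (hd : 0 ≤ d)
    (htu : t ≤ u + d) :
    max (t - s) 0 ^ p ≤ max (u - s) 0 ^ p + d ^ p :=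
  calc max (t - s) 0 ^ p
      ≤ (max (u - s) 0 + d) ^ p := by
        gcongr
        exact max_le (by linarith [le_max_left (u - s) 0]) (by positivity)
    _ ≤ max (u - s) 0 ^ p + d ^ p := Real.rpow_add_le_add_rpow (le_max_right _ _) hd hp0 hp1

theorem stmt_1_general (α η β : ℝ) (hα1 : 1 < α) (hα2 : α ≤ 2) (hη1 : η < 1)
    (hβK : (1 - η) ^ (α - 1) / Real.Gamma α ≤ β) :
    ∀ t ∈ Set.Icc (0:ℝ) 1, ∀ s ∈ Set.Icc (0:ℝ) 1, 0 ≤ Kker α η β t s := by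
  intro t ht s hs
  have hp : α - 1 ≠ 0 := by linarith
  have hΓ : 0 < Real.Gamma α := Real.Gamma_pos_of_pos (by linarith)
  have hkey := rpow_max_sub_le_add (s := s) (by linarith : (0:ℝ) ≤ α - 1) (by linarith)
    (by linarith : 0 ≤ 1 - η) (by linarith [ht.2] : t ≤ η + (1 - η))
  have hdiv : max (t - s) 0 ^ (α - 1) / Real.Gamma α ≤
      max (η - s) 0 ^ (α - 1) / Real.Gamma α + (1 - η) ^ (α - 1) / Real.Gamma α := by
    rw [← add_div]
    gcongr
  rw [Kker, indicator_Icc_rpow_sub_eq hp hs.1, indicator_Icc_rpow_sub_eq hp hs.1]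
  linarith

/-- if `β ≥ β_K := (1−η)^{α−1}/Γ(α)` then `K ≥ 0` on `[0,1]×[0,1]`. -/
theorem stmt_1 (α η β : ℝ) (hα1 : 1 < α) (hα2 : α ≤ 2) (hη0 : 0 < η) (hη1 : η < 1)
    (hβ : 0 < β) (hβK : (1 - η) ^ (α - 1) / Real.Gamma α ≤ β) :
    ∀ t ∈ Set.Icc (0:ℝ) 1, ∀ s ∈ Set.Icc (0:ℝ) 1, 0 ≤ Kker α η β t s :=
  stmt_1_general α η β hα1 hα2 hη1 hβK
end

section
/- For every t ∈ [0,1] with t ≤ t_K := η + (βΓ(α))^{1/(α−1)}, one has K(t,s) ≥ 0 for all s ∈ [0,1]. -/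
/-!
Write `p = α - 1 ∈ (0, 1]` and `c = (βΓ(α))^{1/p}`, so `c^p = βΓ(α)` and `t ≤ η + c`.
Multiplying by `Γ(α) > 0`, the claim becomes
`χ_{[0,t]}(s)(t-s)^p ≤ χ_{[0,η]}(s)(η-s)^p + c^p`.
For `s ≤ t` this follows from `t - s ≤ (η - s)⁺ + c` and the subadditivity of `x ↦ x^p` on
`[0, ∞)` for `p ≤ 1`; for `s > t` the left side vanishes.
-/

open Set MeasureTheory

lemma indicator_rpow_sub_le_indicator_rpow_sub_add {p η t s c : ℝ} (hp0 : 0 < p) (hp1 : p ≤ 1)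
    (hc : 0 ≤ c) (hs : 0 ≤ s) (ht : t ≤ η + c) :
    (Icc 0 t).indicator (fun x => (t - x) ^ p) s ≤
      (Icc 0 η).indicator (fun x => (η - x) ^ p) s + c ^ p := by
  have hη_nonneg : 0 ≤ (Icc 0 η).indicator (fun x => (η - x) ^ p) s :=
    indicator_nonneg (fun x hx => Real.rpow_nonneg (sub_nonneg.2 hx.2) _) s
  by_cases hst : s ≤ t
  swap
  · rw [indicator_of_notMem (fun h => hst h.2)]
    exact add_nonneg hη_nonneg (Real.rpow_nonneg hc p)
  rw [indicator_of_mem (show s ∈ Icc 0 t from ⟨hs, hst⟩)]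
  by_cases hsη : s ≤ η
  · rw [indicator_of_mem (show s ∈ Icc 0 η from ⟨hs, hsη⟩)]
    calc (t - s) ^ p ≤ (η - s + c) ^ p :=
          Real.rpow_le_rpow (sub_nonneg.2 hst) (by linarith) hp0.le
      _ ≤ (η - s) ^ p + c ^ p :=
          Real.rpow_add_le_add_rpow (sub_nonneg.2 hsη) hc hp0.le hp1
  · have : (t - s) ^ p ≤ c ^ p :=
      Real.rpow_le_rpow (sub_nonneg.2 hst) (by linarith) hp0.le
    linarith

lemma Kker_eq_sub_div (α η β t s : ℝ) :
    Kker α η β t s = β - ((Icc 0 t).indicator (fun x => (t - x) ^ (α - 1)) s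
      - (Icc 0 η).indicator (fun x => (η - x) ^ (α - 1)) s) / Real.Gamma α := by
  simp only [Kker, div_eq_mul_inv, indicator_mul_const]
  ring

lemma Kker_nonneg {α η β t s : ℝ} (hα1 : 1 < α) (hα2 : α ≤ 2) (hβ : 0 ≤ β) (hs : 0 ≤ s)
    (ht : t ≤ η + (β * Real.Gamma α) ^ (1 / (α - 1))) : 0 ≤ Kker α η β t s := by
  have hΓ : 0 < Real.Gamma α := Real.Gamma_pos_of_pos (by linarith)
  have hβΓ : 0 ≤ β * Real.Gamma α := mul_nonneg hβ hΓ.le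
  have hc_pow : ((β * Real.Gamma α) ^ (1 / (α - 1))) ^ (α - 1) = β * Real.Gamma α := by
    rw [one_div, Real.rpow_inv_rpow hβΓ (by linarith)]
  have key := indicator_rpow_sub_le_indicator_rpow_sub_add (p := α - 1) (by linarith)
    (by linarith) (Real.rpow_nonneg hβΓ _) hs ht
  rw [hc_pow] at key
  rw [Kker_eq_sub_div, sub_nonneg, div_le_iff₀ hΓ]
  linarith

theorem stmt_4_general (α η β : ℝ) (hα1 : 1 < α) (hα2 : α ≤ 2)
    (hβ : 0 < β) :
    ∀ t ∈ Set.Icc (0:ℝ) 1, t ≤ η + (β * Real.Gamma α) ^ (1 / (α - 1)) →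
      ∀ s ∈ Set.Icc (0:ℝ) 1, 0 ≤ Kker α η β t s :=
  fun _ _ ht _ hs => Kker_nonneg hα1 hα2 hβ.le hs.1 ht

/-- for every `t ∈ [0,1]` with `t ≤ t_K := η + (βΓ(α))^{1/(α−1)}`,
one has `K(t,s) ≥ 0` for all `s ∈ [0,1]`. -/
theorem stmt_4 (α η β : ℝ) (hα1 : 1 < α) (hα2 : α ≤ 2) (hη0 : 0 < η) (hη1 : η < 1)
    (hβ : 0 < β) :
    ∀ t ∈ Set.Icc (0:ℝ) 1, t ≤ η + (β * Real.Gamma α) ^ (1 / (α - 1)) →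
      ∀ s ∈ Set.Icc (0:ℝ) 1, 0 ≤ Kker α η β t s :=
  stmt_4_general α η β hα1 hα2 hβ
end

section
/- Suppose β > β_K := (1−η)^{α−1}/Γ(α). Then with Φ(s) = β + η^{α−1}/Γ(α) and c_{1,K} = (βΓ(α) − (1−η)^{α−1})/(βΓ(α) + η^{α−1}) ∈ (0,1], one has 0 < K(t,s) ≤ Φ(s) for all t,s ∈ [0,1] and K(t,s) ≥ c_{1,K}·Φ(s) for all t ∈ [0,1] and s ∈ [0,1]. -/
/-!
Split `K(t,s) = β + ((η - s)₊^{α-1} - (t - s)₊^{α-1}) / Γ(α)`. The memory term `(η - s)₊^{α-1}` is at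
most `η^{α-1}`, which gives `K ≤ Φ`. Since `x ↦ x^{α-1}` is subadditive for `α ≤ 2`, the difference
`(t - s)₊^{α-1} - (η - s)₊^{α-1}` is at most `(1 - η)^{α-1}`, so `K ≥ β - β_K > 0`; and
`β - β_K` is exactly `c_{1,K} Φ(s)`.
-/

open Set

lemma Real.rpow_sub_rpow_le_rpow_sub {x y p : ℝ} (hy : 0 ≤ y) (hyx : y ≤ x) (hp0 : 0 ≤ p)
    (hp1 : p ≤ 1) : x ^ p - y ^ p ≤ (x - y) ^ p := by
  have := Real.rpow_add_le_add_rpow hy (sub_nonneg.2 hyx) hp0 hp1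
  rw [add_sub_cancel] at this
  linarith

noncomputable def powKernel (p a s : ℝ) : ℝ := (Icc 0 a).indicator (fun x => (a - x) ^ p) s

lemma powKernel_nonneg (p a s : ℝ) : 0 ≤ powKernel p a s :=
  indicator_nonneg (fun _ hx => Real.rpow_nonneg (sub_nonneg.2 hx.2) _) s

lemma powKernel_le_rpow {p a : ℝ} (hp : 0 ≤ p) (ha : 0 ≤ a) (s : ℝ) :
    powKernel p a s ≤ a ^ p :=
  indicator_le' (fun _ hx => Real.rpow_le_rpow (sub_nonneg.2 hx.2) (by linarith [hx.1]) hp)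
    (fun _ _ => Real.rpow_nonneg ha _) s

lemma powKernel_sub_powKernel_le {p a b s T : ℝ} (hp0 : 0 ≤ p) (hp1 : p ≤ 1) (ha : a ≤ T)
    (hb : b ≤ T) (hs : 0 ≤ s) : powKernel p b s - powKernel p a s ≤ (T - a) ^ p := by
  have hTa : 0 ≤ (T - a) ^ p := Real.rpow_nonneg (by linarith) _
  by_cases hsb : s ≤ b
  swap
  · rw [powKernel, indicator_of_notMem (fun h : s ∈ Icc 0 b => hsb h.2), zero_sub]
    linarith [powKernel_nonneg p a s]
  rw [powKernel, indicator_of_mem (show s ∈ Icc 0 b from ⟨hs, hsb⟩)]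
  by_cases hsa : s ≤ a
  swap
  · rw [powKernel, indicator_of_notMem (fun h : s ∈ Icc 0 a => hsa h.2), sub_zero]
    exact Real.rpow_le_rpow (by linarith) (by linarith [not_le.1 hsa]) hp0
  rw [powKernel, indicator_of_mem (show s ∈ Icc 0 a from ⟨hs, hsa⟩)]
  rcases le_total b a with hba | hab
  · have : (b - s) ^ p ≤ (a - s) ^ p := Real.rpow_le_rpow (by linarith) (by linarith) hp0
    linarith
  · calc (b - s) ^ p - (a - s) ^ p ≤ (b - s - (a - s)) ^ p :=
          Real.rpow_sub_rpow_le_rpow_sub (by linarith) (by linarith) hp0 hp1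
      _ ≤ (T - a) ^ p := Real.rpow_le_rpow (by linarith) (by linarith) hp0

lemma Kker_eq (α η β t s : ℝ) :
    Kker α η β t s = β + (powKernel (α - 1) η s - powKernel (α - 1) t s) / Real.Gamma α := by
  simp only [Kker, powKernel, div_eq_mul_inv, indicator_mul_const]
  ring

section Kker

variable {α η β t s : ℝ} (hα1 : 1 < α)
include hα1

lemma Kker_le (hη0 : 0 < η) : Kker α η β t s ≤ β + η ^ (α - 1) / Real.Gamma α := by
  have hdiff : powKernel (α - 1) η s - powKernel (α - 1) t s ≤ η ^ (α - 1) := by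
    linarith [powKernel_le_rpow (sub_nonneg.2 hα1.le) hη0.le s, powKernel_nonneg (α - 1) t s]
  rw [Kker_eq]
  gcongr

lemma sub_le_Kker (hα2 : α ≤ 2) (hη1 : η < 1) (ht : t ≤ 1) (hs : 0 ≤ s) :
    β - (1 - η) ^ (α - 1) / Real.Gamma α ≤ Kker α η β t s := by
  have hdiff := powKernel_sub_powKernel_le (p := α - 1) (by linarith) (by linarith) hη1.le ht hs
  have : (powKernel (α - 1) t s - powKernel (α - 1) η s) / Real.Gamma α ≤
      (1 - η) ^ (α - 1) / Real.Gamma α :=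
    div_le_div_of_nonneg_right hdiff (Real.Gamma_pos_of_pos (by linarith)).le
  rw [Kker_eq, ← neg_sub (powKernel _ t s), neg_div]
  linarith

end Kker

theorem stmt_6_general (α η β : ℝ) (hα1 : 1 < α) (hα2 : α ≤ 2) (hη0 : 0 < η) (hη1 : η < 1)
    (hβK : (1 - η) ^ (α - 1) / Real.Gamma α < β)
    (Φ : ℝ → ℝ) (hΦ : ∀ s, Φ s = β + η ^ (α - 1) / Real.Gamma α)
    (c : ℝ)
    (hc : c = (β * Real.Gamma α - (1 - η) ^ (α - 1)) / (β * Real.Gamma α + η ^ (α - 1))) :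
    c ∈ Set.Ioc (0:ℝ) 1 ∧
    ∀ t ∈ Set.Icc (0:ℝ) 1, ∀ s ∈ Set.Icc (0:ℝ) 1,
      0 < Kker α η β t s ∧ Kker α η β t s ≤ Φ s ∧ c * Φ s ≤ Kker α η β t s := by
  have hΓ : 0 < Real.Gamma α := Real.Gamma_pos_of_pos (by linarith)
  have hβΓ : (1 - η) ^ (α - 1) < β * Real.Gamma α := (div_lt_iff₀ hΓ).1 hβK
  have h1η : 0 ≤ (1 - η) ^ (α - 1) := Real.rpow_nonneg (sub_nonneg.2 hη1.le) _
  have hηp : 0 ≤ η ^ (α - 1) := Real.rpow_nonneg hη0.le _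
  have hden : 0 < β * Real.Gamma α + η ^ (α - 1) := by linarith
  have hcΦ (s : ℝ) : c * Φ s = β - (1 - η) ^ (α - 1) / Real.Gamma α := by
    rw [hc, hΦ]
    field_simp
  refine ⟨⟨hc ▸ div_pos (by linarith) hden, hc ▸ (div_le_one hden).2 (by linarith)⟩, ?_⟩
  intro t ht s hs
  have hlower := sub_le_Kker (β := β) hα1 hα2 hη1 ht.2 hs.1
  exact ⟨by linarith, hΦ s ▸ Kker_le hα1 hη0, hcΦ s ▸ hlower⟩

/-- if `β > β_K` then with `Φ(s) = β + η^{α−1}/Γ(α)` and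
`c_{1,K} = (βΓ(α) − (1−η)^{α−1})/(βΓ(α) + η^{α−1}) ∈ (0,1]`, one has
`0 < K(t,s) ≤ Φ(s)` and `K(t,s) ≥ c_{1,K}·Φ(s)` for all `t, s ∈ [0,1]`. -/
theorem stmt_6 (α η β : ℝ) (hα1 : 1 < α) (hα2 : α ≤ 2) (hη0 : 0 < η) (hη1 : η < 1)
    (hβ : 0 < β) (hβK : (1 - η) ^ (α - 1) / Real.Gamma α < β)
    (Φ : ℝ → ℝ) (hΦ : ∀ s, Φ s = β + η ^ (α - 1) / Real.Gamma α)
    (c : ℝ)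
    (hc : c = (β * Real.Gamma α - (1 - η) ^ (α - 1)) / (β * Real.Gamma α + η ^ (α - 1))) :
    c ∈ Set.Ioc (0:ℝ) 1 ∧
    ∀ t ∈ Set.Icc (0:ℝ) 1, ∀ s ∈ Set.Icc (0:ℝ) 1,
      0 < Kker α η β t s ∧ Kker α η β t s ≤ Φ s ∧ c * Φ s ≤ Kker α η β t s :=
  stmt_6_general α η β hα1 hα2 hη0 hη1 hβK Φ hΦ c hc
end

section
/- The operator T defined by T(u)(t) = H₁[u]·γ(t) + H₂[u] + ∫₀¹ K(t,s) f(s,u(s)) ds maps C([0,1],ℝ) into C([0,1],ℝ) and is completely continuous, i.e. T is continuous and maps every bounded subset of C([0,1],ℝ) to a relatively compact subset of C([0,1],ℝ). -/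
/-!
The operator splits as `T u = H₁[u] • γ + H₂[u] • 1 + A (N u)`, where `N u = f(·, u(·))` is
the superposition operator and `A` is the Fredholm operator with kernel `K`. The first two summands
have bounded scalar coefficients and a fixed direction, so they send bounded sets to relatively
compact ones. For `α > 1` the kernel agrees on `[0,1]²` with a continuous function, written with
`max (·) 0 ^ (α - 1)` in place of the indicators; then `t ↦ K(t, ·)` is continuous into
`C([0,1])`, which makes `A` send bounded sets to uniformly bounded equicontinuous families, and
Arzelà–Ascoli applies. Since `N` is continuous and preserves boundedness, `A ∘ N` is completely
continuous as well.
-/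

open Set MeasureTheory

open Bornology

def IsCompletelyContinuous {X Y : Type*} [TopologicalSpace X] [Bornology X] [TopologicalSpace Y]
    (T : X → Y) : Prop :=
  Continuous T ∧ ∀ S : Set X, IsBounded S → IsCompact (closure (T '' S))

namespace IsCompletelyContinuous

variable {X Y Z : Type*} [TopologicalSpace X] [Bornology X] [TopologicalSpace Y]

theorem add [Add Y] [ContinuousAdd Y] [T2Space Y] {T₁ T₂ : X → Y}
    (h₁ : IsCompletelyContinuous T₁) (h₂ : IsCompletelyContinuous T₂) :
    IsCompletelyContinuous fun x => T₁ x + T₂ x := by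
  refine ⟨h₁.1.add h₂.1, fun S hS => ?_⟩
  refine ((h₁.2 S hS).add (h₂.2 S hS)).closure_of_subset ?_
  rintro _ ⟨x, hx, rfl⟩
  exact Set.add_mem_add (subset_closure (mem_image_of_mem _ hx))
    (subset_closure (mem_image_of_mem _ hx))

theorem comp [TopologicalSpace Z] [Bornology Z] {T : Z → Y} {N : X → Z}
    (hT : IsCompletelyContinuous T) (hN : Continuous N)
    (hNb : ∀ S : Set X, IsBounded S → IsBounded (N '' S)) : IsCompletelyContinuous (T ∘ N) :=
  ⟨hT.1.comp hN, fun S hS => by rw [image_comp]; exact hT.2 _ (hNb S hS)⟩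

end IsCompletelyContinuous

theorem isCompletelyContinuous_smul_const {X 𝕜 Y : Type*} [TopologicalSpace X] [Bornology X]
    [NormedField 𝕜] [ProperSpace 𝕜] [TopologicalSpace Y] [SMul 𝕜 Y] [ContinuousSMul 𝕜 Y]
    [T2Space Y] {H : X → 𝕜} (hH : Continuous H)
    (hHb : ∀ S : Set X, IsBounded S → IsBounded (H '' S)) (g : Y) :
    IsCompletelyContinuous fun x => H x • g := by
  refine ⟨hH.smul continuous_const, fun S hS => ?_⟩
  have hsmul : Continuous fun c : 𝕜 => c • g := continuous_id.smul continuous_const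
  refine ((hHb S hS).isCompact_closure.image hsmul).closure_of_subset ?_
  rintro _ ⟨x, hx, rfl⟩
  exact mem_image_of_mem _ (subset_closure (mem_image_of_mem H hx))

theorem equicontinuous_of_dist_le_mul_dist {ι X Y Z : Type*} [TopologicalSpace X]
    [PseudoMetricSpace Y] [PseudoMetricSpace Z] {F : ι → X → Y} {κ : X → Z} (hκ : Continuous κ)
    (C : ℝ) (h : ∀ i x y, dist (F i x) (F i y) ≤ C * dist (κ x) (κ y)) : Equicontinuous F := by
  intro x₀
  rw [Metric.equicontinuousAt_iff_right]
  intro ε hε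
  filter_upwards [Metric.tendsto_nhds.1 (hκ.tendsto x₀) (ε / (|C| + 1)) (by positivity)]
    with x hx i
  calc dist (F i x₀) (F i x) ≤ C * dist (κ x₀) (κ x) := h i x₀ x
    _ ≤ |C| * dist (κ x) (κ x₀) := by rw [dist_comm]; gcongr; exact le_abs_self C
    _ ≤ (|C| + 1) * dist (κ x) (κ x₀) := by gcongr; linarith
    _ < ε := by rwa [lt_div_iff₀' (by positivity)] at hx

namespace ContinuousMap

theorem isCompact_closure_range_of_equicontinuous {ι X Y : Type*}
    [TopologicalSpace X] [CompactSpace X] [MetricSpace Y] {F : ι → C(X, Y)} {K : Set Y}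
    (hK : IsCompact K) (hFK : ∀ i x, F i x ∈ K) (hF : Equicontinuous fun i => ⇑(F i)) :
    IsCompact (closure (range F)) := by
  let e := isometryEquivBoundedOfCompact X Y
  have hbcf : IsCompact (closure (range (e ∘ F))) := by
    refine BoundedContinuousFunction.arzela_ascoli K hK _ ?_ ?_
    · rintro _ x ⟨i, rfl⟩
      exact hFK i x
    · convert hF.comp (rangeSplitting (e ∘ F)) with g
      exact congrArg DFunLike.coe (apply_rangeSplitting (e ∘ F) g).symm
  rwa [range_comp, ← IsometryEquiv.coe_toHomeomorph, ← Homeomorph.image_closure,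
    Homeomorph.isCompact_image] at hbcf

variable {X E F : Type*} [TopologicalSpace X] [NormedAddCommGroup E] [NormedAddCommGroup F]

def superposition (g : C(X × E, F)) (u : C(X, E)) : C(X, F) :=
  g.comp ((ContinuousMap.id X).prodMk u)

@[simp]
theorem superposition_apply (g : C(X × E, F)) (u : C(X, E)) (x : X) :
    superposition g u x = g (x, u x) := rfl

variable [CompactSpace X]

theorem continuous_superposition (g : C(X × E, F)) : Continuous (superposition g) :=
  continuous_of_continuous_uncurry _ (g.continuous.comp (continuous_snd.prodMk continuous_eval))

theorem isBounded_image_superposition [ProperSpace E] (g : C(X × E, F)) {S : Set C(X, E)}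
    (hS : IsBounded S) : IsBounded (superposition g '' S) := by
  obtain ⟨R, hR⟩ := hS.subset_closedBall 0
  have hK : IsCompact ((univ : Set X) ×ˢ Metric.closedBall (0 : E) R) :=
    isCompact_univ.prod (isCompact_closedBall 0 R)
  obtain ⟨C, hC⟩ := hK.exists_bound_of_continuousOn g.continuous.continuousOn
  refine isBounded_iff_forall_norm_le.2 ⟨max C 0, ?_⟩
  rintro _ ⟨u, hu, rfl⟩
  refine (norm_le _ (le_max_right _ _)).2 fun x =>
    (hC _ ⟨mem_univ x, ?_⟩).trans (le_max_left _ _)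
  exact mem_closedBall_zero_iff.2
    ((norm_coe_le_norm u x).trans (mem_closedBall_zero_iff.1 (hR hu)))

end ContinuousMap

local notation "I" => Icc (0 : ℝ) 1

theorem continuous_intervalIntegral_kernel_mul_IccExtend (k : C(ℝ × ℝ, ℝ)) :
    Continuous fun p : C(I, ℝ) × ℝ =>
      ∫ s in (0 : ℝ)..1, k (p.2, s) * IccExtend zero_le_one p.1 s := by
  refine intervalIntegral.continuous_parametric_intervalIntegral_of_continuous' ?_ 0 1
  exact (k.continuous.comp (continuous_fst.snd.prodMk continuous_snd)).mul
    (Continuous.IccExtend (continuous_eval.comp (continuous_fst.fst.fst.prodMk continuous_snd))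
      continuous_snd)

noncomputable def fredholmOp (k : C(ℝ × ℝ, ℝ)) (w : C(I, ℝ)) : C(I, ℝ) where
  toFun t := ∫ s in (0 : ℝ)..1, k (t, s) * IccExtend zero_le_one w s
  continuous_toFun := (continuous_intervalIntegral_kernel_mul_IccExtend k).comp
    (continuous_const.prodMk continuous_subtype_val)

theorem fredholmOp_apply (k : C(ℝ × ℝ, ℝ)) (w : C(I, ℝ)) (t : I) :
    fredholmOp k w t = ∫ s in (0 : ℝ)..1, k (t, s) * IccExtend zero_le_one w s := rfl

theorem continuous_fredholmOp (k : C(ℝ × ℝ, ℝ)) : Continuous (fredholmOp k) :=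
  ContinuousMap.continuous_of_continuous_uncurry _
    ((continuous_intervalIntegral_kernel_mul_IccExtend k).comp
      (continuous_fst.prodMk (continuous_subtype_val.comp continuous_snd)))

def kernelSlice (k : C(ℝ × ℝ, ℝ)) : C(I, C(I, ℝ)) :=
  ContinuousMap.curry ⟨fun p => k (p.1, p.2), by fun_prop⟩

theorem abs_intervalIntegral_mul_IccExtend_le {h : ℝ → ℝ} {B : ℝ} (hh : ∀ s ∈ I, |h s| ≤ B)
    (w : C(I, ℝ)) : |∫ s in (0 : ℝ)..1, h s * IccExtend zero_le_one w s| ≤ B * ‖w‖ := by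
  have := intervalIntegral.norm_integral_le_of_norm_le_const (a := 0) (b := 1) (C := B * ‖w‖)
    (f := fun s => h s * IccExtend zero_le_one w s) fun s hs => ?_
  · simpa using this
  have hs' : s ∈ I := Ioc_subset_Icc_self (by simpa using hs)
  rw [norm_mul, IccExtend_of_mem _ _ hs']
  exact mul_le_mul (hh s hs') (w.norm_coe_le_norm _) (norm_nonneg _)
    ((abs_nonneg _).trans (hh s hs'))

theorem abs_fredholmOp_apply_le (k : C(ℝ × ℝ, ℝ)) (w : C(I, ℝ)) (t : I) :
    |fredholmOp k w t| ≤ ‖kernelSlice k t‖ * ‖w‖ :=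
  abs_intervalIntegral_mul_IccExtend_le
    (fun s hs => (kernelSlice k t).norm_coe_le_norm ⟨s, hs⟩) w

theorem dist_fredholmOp_apply_le (k : C(ℝ × ℝ, ℝ)) (w : C(I, ℝ)) (t t' : I) :
    dist (fredholmOp k w t) (fredholmOp k w t') ≤
      dist (kernelSlice k t) (kernelSlice k t') * ‖w‖ := by
  have hint (t : ℝ) :
      IntervalIntegrable (fun s => k (t, s) * IccExtend zero_le_one w s) volume 0 1 :=
    ((k.continuous.comp (continuous_const.prodMk continuous_id)).mul
      w.continuous.Icc_extend').intervalIntegrable 0 1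
  rw [Real.dist_eq, fredholmOp_apply, fredholmOp_apply,
    ← intervalIntegral.integral_sub (hint t) (hint t')]
  simp_rw [← sub_mul]
  exact abs_intervalIntegral_mul_IccExtend_le
    (fun s hs => (kernelSlice k t).dist_apply_le_dist (g := kernelSlice k t') ⟨s, hs⟩) w

theorem isCompletelyContinuous_fredholmOp (k : C(ℝ × ℝ, ℝ)) :
    IsCompletelyContinuous (fredholmOp k) := by
  refine ⟨continuous_fredholmOp k, fun S hS => ?_⟩
  obtain ⟨C, hC⟩ := isBounded_iff_forall_norm_le.1 hS
  rw [image_eq_range]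
  refine ContinuousMap.isCompact_closure_range_of_equicontinuous
    (isCompact_closedBall (0 : ℝ) (‖kernelSlice k‖ * C)) (fun w t => ?_) ?_
  · rw [mem_closedBall_zero_iff, Real.norm_eq_abs]
    exact (abs_fredholmOp_apply_le k w t).trans (mul_le_mul ((kernelSlice k).norm_coe_le_norm t)
      (hC w w.2) (norm_nonneg _) (norm_nonneg (kernelSlice k)))
  · refine equicontinuous_of_dist_le_mul_dist (kernelSlice k).continuous C fun w t t' => ?_
    rw [mul_comm]
    exact (dist_fredholmOp_apply_le k w t t').trans
      (mul_le_mul_of_nonneg_left (hC w w.2) dist_nonneg)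

theorem continuous_max_zero_rpow {p : ℝ} (hp : 0 < p) : Continuous fun x : ℝ => max x 0 ^ p :=
  (Real.continuous_rpow_const hp.le).comp (continuous_id.max continuous_const)

theorem indicator_Icc_sub_rpow_div {a c p s : ℝ} (hp : p ≠ 0) (hs : 0 ≤ s) :
    (Icc 0 a).indicator (fun x => (a - x) ^ p / c) s = max (a - s) 0 ^ p / c := by
  by_cases hsa : s ≤ a
  · rw [indicator_of_mem (mem_Icc.2 ⟨hs, hsa⟩), max_eq_left (sub_nonneg.2 hsa)]
  · rw [indicator_of_notMem (fun h => hsa h.2), max_eq_right (by linarith),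
      Real.zero_rpow hp, zero_div]

noncomputable def greenKernel {α : ℝ} (hα : 1 < α) (η β : ℝ) : C(ℝ × ℝ, ℝ) where
  toFun p :=
    β + max (η - p.2) 0 ^ (α - 1) / Real.Gamma α - max (p.1 - p.2) 0 ^ (α - 1) / Real.Gamma α
  continuous_toFun := by
    have h := continuous_max_zero_rpow (sub_pos.2 hα)
    exact (continuous_const.add ((h.comp (continuous_const.sub continuous_snd)).div_const _)).sub
      ((h.comp (continuous_fst.sub continuous_snd)).div_const _)

theorem Kker_eq_greenKernel {α : ℝ} (hα : 1 < α) (η β t : ℝ) {s : ℝ} (hs : 0 ≤ s) :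
    Kker α η β t s = greenKernel hα η β (t, s) := by
  have hp : α - 1 ≠ 0 := (sub_pos.2 hα).ne'
  simp only [Kker, greenKernel, ContinuousMap.coe_mk, indicator_Icc_sub_rpow_div hp hs]

theorem stmt_11_general (α η β : ℝ) (hα1 : 1 < α)
    (f : ℝ → ℝ → ℝ)
    (hf : ContinuousOn (fun p : ℝ × ℝ => f p.1 p.2) (Set.Icc (0:ℝ) 1 ×ˢ Set.univ))
    (H₁ H₂ : ContinuousMap (Set.Icc (0:ℝ) 1) ℝ → ℝ)
    (hH₁c : Continuous H₁) (hH₂c : Continuous H₂)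
    (hH₁b : ∀ S : Set (ContinuousMap (Set.Icc (0:ℝ) 1) ℝ),
      Bornology.IsBounded S → Bornology.IsBounded (H₁ '' S))
    (hH₂b : ∀ S : Set (ContinuousMap (Set.Icc (0:ℝ) 1) ℝ),
      Bornology.IsBounded S → Bornology.IsBounded (H₂ '' S)) :
    ∃ T : ContinuousMap (Set.Icc (0:ℝ) 1) ℝ → ContinuousMap (Set.Icc (0:ℝ) 1) ℝ,
      (∀ u t, T u t = H₁ u * gam α η β (t : ℝ) + H₂ u +
        ∫ s in (0:ℝ)..1, Kker α η β (t : ℝ) s * f s (Set.IccExtend zero_le_one u s)) ∧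
      Continuous T ∧
      ∀ S : Set (ContinuousMap (Set.Icc (0:ℝ) 1) ℝ),
        Bornology.IsBounded S → IsCompact (closure (T '' S)) := by
  let g : C(I × ℝ, ℝ) :=
    ⟨fun p => f p.1 p.2, hf.comp_continuous (f := fun p : I × ℝ => ((p.1 : ℝ), p.2))
      (by fun_prop) fun p => ⟨p.1.2, mem_univ _⟩⟩
  let γ : C(I, ℝ) := ⟨fun t => gam α η β t, by unfold gam; fun_prop⟩
  let T u :=
    H₁ u • γ + H₂ u • (1 : C(I, ℝ)) + fredholmOp (greenKernel hα1 η β) (g.superposition u)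
  have hT : IsCompletelyContinuous T :=
    ((isCompletelyContinuous_smul_const hH₁c hH₁b γ).add
      (isCompletelyContinuous_smul_const hH₂c hH₂b 1)).add
      ((isCompletelyContinuous_fredholmOp _).comp g.continuous_superposition
        fun _ hS => g.isBounded_image_superposition hS)
  refine ⟨T, fun u t => ?_, hT⟩
  simp only [T, γ, ContinuousMap.add_apply, ContinuousMap.smul_apply, ContinuousMap.one_apply,
    ContinuousMap.coe_mk, smul_eq_mul, mul_one, fredholmOp_apply]
  congr 1
  refine intervalIntegral.integral_congr fun s hs => ?_
  rw [uIcc_of_le zero_le_one] at hs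
  simp [Kker_eq_greenKernel hα1 _ _ _ hs.1, IccExtend_of_mem _ _ hs, g]

/-- the operator
`T(u)(t) = H₁[u]·γ(t) + H₂[u] + ∫₀¹ K(t,s) f(s,u(s)) ds` maps `C([0,1],ℝ)`
into itself and is completely continuous: it is continuous and maps bounded sets
to relatively compact sets. -/
theorem stmt_11 (α η β : ℝ) (hα1 : 1 < α) (hα2 : α ≤ 2) (hη0 : 0 < η) (hη1 : η < 1)
    (hβ : 0 < β)
    (f : ℝ → ℝ → ℝ)
    (hf : ContinuousOn (fun p : ℝ × ℝ => f p.1 p.2) (Set.Icc (0:ℝ) 1 ×ˢ Set.univ))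
    (hf0 : ∀ t ∈ Set.Icc (0:ℝ) 1, ∀ x : ℝ, 0 ≤ f t x)
    (H₁ H₂ : ContinuousMap (Set.Icc (0:ℝ) 1) ℝ → ℝ)
    (hH₁c : Continuous H₁) (hH₂c : Continuous H₂)
    (hH₁0 : ∀ u, 0 ≤ H₁ u) (hH₂0 : ∀ u, 0 ≤ H₂ u)
    (hH₁b : ∀ S : Set (ContinuousMap (Set.Icc (0:ℝ) 1) ℝ),
      Bornology.IsBounded S → Bornology.IsBounded (H₁ '' S))
    (hH₂b : ∀ S : Set (ContinuousMap (Set.Icc (0:ℝ) 1) ℝ),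
      Bornology.IsBounded S → Bornology.IsBounded (H₂ '' S)) :
    ∃ T : ContinuousMap (Set.Icc (0:ℝ) 1) ℝ → ContinuousMap (Set.Icc (0:ℝ) 1) ℝ,
      (∀ u t, T u t = H₁ u * gam α η β (t : ℝ) + H₂ u +
        ∫ s in (0:ℝ)..1, Kker α η β (t : ℝ) s * f s (Set.IccExtend zero_le_one u s)) ∧
      Continuous T ∧
      ∀ S : Set (ContinuousMap (Set.Icc (0:ℝ) 1) ℝ),
        Bornology.IsBounded S → IsCompact (closure (T '' S)) :=
  stmt_11_general α η β hα1 f hf H₁ H₂ hH₁c hH₂c hH₁b hH₂b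
end

section
/- (Cone invariance, Case 1) Suppose β > max{β_K, β_γ} and let ρ > 0. Set σ₁ = min{σ_{1,γ}, c_{1,K}, 1}, where c_{1,K} = (βΓ(α) − (1−η)^{α−1})/(βΓ(α) + η^{α−1}) and σ_{1,γ} = (β + (η−1)Γ(3−α))/(β + ηΓ(3−α)), and let P_{σ₁} = {u ∈ C([0,1],ℝ) : min_{t∈[0,1]} u(t) ≥ σ₁·‖u‖_∞}. Then for every u ∈ P_{σ₁} with ‖u‖_∞ ≤ ρ, the function T(u) belongs to P_{σ₁}. -/
/-!
Each of the three summands of `T u`, namely `H₁[u]·γ`, `H₂[u]` and `∫ K(·,s) f(s,u(s)) ds`, is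
nonnegative and satisfies `σ₁·φ(t') ≤ φ(t)` for all `t, t'`. For `γ` and `K` this holds because
they are pinched between bounds `0 ≤ m ≤ · ≤ M` whose ratio `m/M` is `σ_{1,γ}`, respectively
`c_{1,K}`; the lower bound on `K` comes from the subadditivity of `x ↦ x^{α-1}`. Summing and taking
the supremum over `t'` gives `σ₁‖T u‖ ≤ T u t`.
-/

open Set MeasureTheory

/-- `C([0,1],ℝ)` with the supremum norm. -/
abbrev CI := ContinuousMap (Set.Icc (0:ℝ) 1) ℝ

theorem intervalIntegrable_of_mem_Icc {k : ℝ → ℝ} {a b m M : ℝ} (hk : Measurable k)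
    (hkb : ∀ s, k s ∈ Icc m M) : IntervalIntegrable k volume a b := by
  rw [intervalIntegrable_iff]
  refine Measure.integrableOn_of_bounded (M := max |m| |M|) measure_Ioc_lt_top.ne
    hk.aestronglyMeasurable (Filter.Eventually.of_forall fun s => ?_)
  rw [Real.norm_eq_abs]
  exact abs_le_max_abs_abs (hkb s).1 (hkb s).2

theorem integral_mul_mem_Icc {k F : ℝ → ℝ} {a b m M : ℝ} (hab : a ≤ b) (hk : Measurable k)
    (hkb : ∀ s, k s ∈ Icc m M) (hF : ContinuousOn F (Icc a b)) (hF0 : ∀ s ∈ Icc a b, 0 ≤ F s) :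
    ∫ s in a..b, k s * F s ∈ Icc (m * ∫ s in a..b, F s) (M * ∫ s in a..b, F s) := by
  have hFi : IntervalIntegrable F volume a b := hF.intervalIntegrable_of_Icc hab
  have hkF : IntervalIntegrable (fun s => k s * F s) volume a b :=
    (intervalIntegrable_of_mem_Icc hk hkb).mul_continuousOn (by rwa [uIcc_of_le hab])
  rw [← intervalIntegral.integral_const_mul, ← intervalIntegral.integral_const_mul]
  exact ⟨intervalIntegral.integral_mono_on hab (hFi.const_mul m) hkF
      fun s hs => mul_le_mul_of_nonneg_right (hkb s).1 (hF0 s hs),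
    intervalIntegral.integral_mono_on hab hkF (hFi.const_mul M)
      fun s hs => mul_le_mul_of_nonneg_right (hkb s).2 (hF0 s hs)⟩

section Pinched

variable {X : Type*}

/-- `σ · sup φ ≤ inf φ` with `φ ≥ 0`: the cone condition defining `P_σ`. -/
def IsPinched (σ : ℝ) (φ : X → ℝ) : Prop :=
  (∀ x, 0 ≤ φ x) ∧ ∀ x y, σ * φ y ≤ φ x

theorem IsPinched.add {σ : ℝ} {φ ψ : X → ℝ} (hφ : IsPinched σ φ) (hψ : IsPinched σ ψ) :
    IsPinched σ (fun x => φ x + ψ x) :=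
  ⟨fun x => add_nonneg (hφ.1 x) (hψ.1 x), fun x y => by
    rw [mul_add]; exact add_le_add (hφ.2 x y) (hψ.2 x y)⟩

theorem IsPinched.const_mul {σ a : ℝ} {φ : X → ℝ} (ha : 0 ≤ a) (hφ : IsPinched σ φ) :
    IsPinched σ (fun x => a * φ x) :=
  ⟨fun x => mul_nonneg ha (hφ.1 x), fun x y => by
    rw [mul_left_comm]; exact mul_le_mul_of_nonneg_left (hφ.2 x y) ha⟩

theorem isPinched_const {σ c : ℝ} (hc : 0 ≤ c) (hσ : σ ≤ 1) :
    IsPinched σ (fun _ : X => c) :=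
  ⟨fun _ => hc, fun _ _ => mul_le_of_le_one_left hc hσ⟩

theorem isPinched_of_mem_Icc {σ m M : ℝ} {φ : X → ℝ} (hσ : 0 ≤ σ) (hm : 0 ≤ m)
    (hσM : σ * M ≤ m) (hφ : ∀ x, φ x ∈ Icc m M) : IsPinched σ φ :=
  ⟨fun x => hm.trans (hφ x).1, fun x y =>
    calc σ * φ y ≤ σ * M := mul_le_mul_of_nonneg_left (hφ y).2 hσ
      _ ≤ m := hσM
      _ ≤ φ x := (hφ x).1⟩

theorem IsPinched.mul_norm_le [TopologicalSpace X] [CompactSpace X] {σ : ℝ} {g : C(X, ℝ)}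
    (hg : IsPinched σ g) (hσ : 0 ≤ σ) (x : X) : σ * ‖g‖ ≤ g x := by
  rw [← Real.norm_of_nonneg hσ, ← norm_smul, ContinuousMap.norm_le _ (hg.1 x)]
  intro y
  rw [ContinuousMap.smul_apply, smul_eq_mul, Real.norm_of_nonneg (mul_nonneg hσ (hg.1 y))]
  exact hg.2 x y

theorem isPinched_integral_mul {k : X → ℝ → ℝ} {F : ℝ → ℝ} {a b σ m M : ℝ}
    (hab : a ≤ b) (hσ : 0 ≤ σ) (hm : 0 ≤ m) (hσM : σ * M ≤ m) (hk : ∀ x, Measurable (k x))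
    (hkb : ∀ x s, k x s ∈ Icc m M) (hF : ContinuousOn F (Icc a b))
    (hF0 : ∀ s ∈ Icc a b, 0 ≤ F s) :
    IsPinched σ (fun x => ∫ s in a..b, k x s * F s) := by
  have hI : 0 ≤ ∫ s in a..b, F s := intervalIntegral.integral_nonneg hab hF0
  refine isPinched_of_mem_Icc hσ (mul_nonneg hm hI) ?_
    fun x => integral_mul_mem_Icc hab (hk x) (hkb x) hF hF0
  rw [← mul_assoc]
  exact mul_le_mul_of_nonneg_right hσM hI

end Pinched

theorem mul_div_le_div_of_le_div {σ a b c : ℝ} (hb : 0 < b) (hc : 0 ≤ c) (h : σ ≤ a / b) :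
    σ * (b / c) ≤ a / c := by
  rw [← mul_div_assoc]
  exact div_le_div_of_nonneg_right ((le_div_iff₀ hb).1 h) hc

theorem indicator_rpow_nonneg (p t s : ℝ) :
    0 ≤ (Icc 0 t).indicator (fun x => (t - x) ^ p) s :=
  indicator_nonneg (fun _ hx => Real.rpow_nonneg (sub_nonneg.2 hx.2) _) s

theorem indicator_rpow_le {p t : ℝ} (hp : 0 ≤ p) (ht : 0 ≤ t) (s : ℝ) :
    (Icc 0 t).indicator (fun x => (t - x) ^ p) s ≤ t ^ p := by
  by_cases hs : s ∈ Icc 0 t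
  · rw [indicator_of_mem hs]
    exact Real.rpow_le_rpow (sub_nonneg.2 hs.2) (by linarith [hs.1]) hp
  · rw [indicator_of_notMem hs]
    positivity

theorem indicator_rpow_le_add {p η t : ℝ} (hp0 : 0 ≤ p) (hp1 : p ≤ 1) (hη : η ≤ 1) (ht : t ≤ 1)
    (s : ℝ) :
    (Icc 0 t).indicator (fun x => (t - x) ^ p) s ≤
      (Icc 0 η).indicator (fun x => (η - x) ^ p) s + (1 - η) ^ p := by
  by_cases hst : s ∈ Icc 0 t
  · rw [indicator_of_mem hst]
    by_cases hsη : s ∈ Icc 0 η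
    · rw [indicator_of_mem hsη]
      calc (t - s) ^ p ≤ ((η - s) + (1 - η)) ^ p :=
            Real.rpow_le_rpow (by linarith [hst.2]) (by linarith) hp0
        _ ≤ (η - s) ^ p + (1 - η) ^ p :=
            Real.rpow_add_le_add_rpow (by linarith [hsη.2]) (by linarith) hp0 hp1
    · have hηs : η < s := by
        by_contra! h
        exact hsη ⟨hst.1, h⟩
      rw [indicator_of_notMem hsη, zero_add]
      exact Real.rpow_le_rpow (by linarith [hst.2]) (by linarith) hp0
  · rw [indicator_of_notMem hst]
    exact add_nonneg (indicator_rpow_nonneg p η s) (Real.rpow_nonneg (by linarith) p)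

theorem measurable_Kker (α η β t : ℝ) : Measurable (Kker α η β t) := by
  unfold Kker
  fun_prop (disch := exact measurableSet_Icc)

theorem Kker_mem_Icc {α η β t : ℝ} (hα1 : 1 ≤ α) (hα2 : α ≤ 2) (hη0 : 0 ≤ η) (hη1 : η ≤ 1)
    (ht : t ≤ 1) (s : ℝ) :
    Kker α η β t s ∈ Icc ((β * Real.Gamma α - (1 - η) ^ (α - 1)) / Real.Gamma α)
      ((β * Real.Gamma α + η ^ (α - 1)) / Real.Gamma α) := by
  have hΓ : 0 < Real.Gamma α := Real.Gamma_pos_of_pos (by linarith)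
  have hK : Kker α η β t s * Real.Gamma α = β * Real.Gamma α +
      (Icc 0 η).indicator (fun x => (η - x) ^ (α - 1)) s -
      (Icc 0 t).indicator (fun x => (t - x) ^ (α - 1)) s := by
    simp only [Kker, div_eq_mul_inv, indicator_mul_const]
    field_simp
  have hlow := indicator_rpow_le_add (p := α - 1) (s := s) (by linarith) (by linarith) hη1 ht
  have hup := indicator_rpow_le (s := s) (sub_nonneg.2 hα1) hη0
  have hnonneg := indicator_rpow_nonneg (α - 1) t s
  rw [mem_Icc, le_div_iff₀ hΓ, div_le_iff₀ hΓ, hK]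
  constructor <;> linarith

theorem gam_mem_Icc {α η β t : ℝ} (hΓ : Real.Gamma (3 - α) ≠ 0) (ht : t ∈ Icc (0 : ℝ) 1) :
    gam α η β t ∈ Icc ((β + (η - 1) * Real.Gamma (3 - α)) / Real.Gamma (3 - α))
      ((β + η * Real.Gamma (3 - α)) / Real.Gamma (3 - α)) := by
  rw [add_div, add_div, mul_div_cancel_right₀ _ hΓ, mul_div_cancel_right₀ _ hΓ]
  unfold gam
  constructor <;> linarith [ht.1, ht.2]

theorem stmt_13_general
    (α η β : ℝ) (hα1 : 1 < α) (hα2 : α ≤ 2) (hη0 : 0 < η) (hη1 : η < 1)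
    (f : ℝ → ℝ → ℝ)
    (hf : ContinuousOn (fun p : ℝ × ℝ => f p.1 p.2) (Set.Icc (0:ℝ) 1 ×ˢ Set.univ))
    (hf0 : ∀ t ∈ Set.Icc (0:ℝ) 1, ∀ x : ℝ, 0 ≤ f t x)
    (H₁ H₂ : CI → ℝ)
    (hH₁0 : ∀ u, 0 ≤ H₁ u) (hH₂0 : ∀ u, 0 ≤ H₂ u)
    (T : CI → CI)
    (hT : ∀ (u : CI) (t : Set.Icc (0:ℝ) 1), T u t = H₁ u * gam α η β (t : ℝ) + H₂ u +
      ∫ s in (0:ℝ)..1, Kker α η β (t : ℝ) s * f s (Set.IccExtend zero_le_one u s))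
    (hβ : max ((1 - η) ^ (α - 1) / Real.Gamma α) ((1 - η) * Real.Gamma (3 - α)) < β)
    (ρ : ℝ)
    (σ₁ : ℝ)
    (hσ₁ : σ₁ = min ((β + (η - 1) * Real.Gamma (3 - α)) / (β + η * Real.Gamma (3 - α)))
      (min ((β * Real.Gamma α - (1 - η) ^ (α - 1)) / (β * Real.Gamma α + η ^ (α - 1))) 1)) :
    ∀ u : CI, (∀ t, σ₁ * ‖u‖ ≤ u t) → ‖u‖ ≤ ρ → ∀ t, σ₁ * ‖T u‖ ≤ T u t := by
  intro u _ _ t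
  obtain ⟨hβK, hβγ⟩ := max_lt_iff.1 hβ
  have hΓα : 0 < Real.Gamma α := Real.Gamma_pos_of_pos (by linarith)
  have hΓ₃ : 0 < Real.Gamma (3 - α) := Real.Gamma_pos_of_pos (by linarith)
  have hγ_num : 0 ≤ β + (η - 1) * Real.Gamma (3 - α) := by linarith
  have hK_num : 0 ≤ β * Real.Gamma α - (1 - η) ^ (α - 1) := by
    linarith [(div_lt_iff₀ hΓα).1 hβK]
  have hβ0 : 0 < β := (mul_nonneg (by linarith) hΓ₃.le).trans_lt hβγ
  have hγ_den : 0 < β + η * Real.Gamma (3 - α) := by positivity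
  have hK_den : 0 < β * Real.Gamma α + η ^ (α - 1) := by positivity
  have hσ₁0 : 0 ≤ σ₁ := hσ₁ ▸ le_min (div_nonneg hγ_num hγ_den.le)
    (le_min (div_nonneg hK_num hK_den.le) zero_le_one)
  have hσ₁γ : σ₁ ≤ _ := hσ₁ ▸ min_le_left _ _
  have hσ₁K : σ₁ ≤ _ := hσ₁ ▸ (min_le_right _ _).trans (min_le_left _ _)
  have hσ₁1 : σ₁ ≤ 1 := hσ₁ ▸ (min_le_right _ _).trans (min_le_right _ _)
  have hF : ContinuousOn (fun s => f s (IccExtend zero_le_one u s)) (Icc 0 1) :=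
    hf.comp (continuous_id.prodMk u.continuous.Icc_extend').continuousOn
      fun s hs => ⟨hs, mem_univ _⟩
  have hTu : IsPinched σ₁ (T u) := by
    rw [show ⇑(T u) = _ from funext (hT u)]
    refine ((IsPinched.const_mul (hH₁0 u) ?_).add (isPinched_const (hH₂0 u) hσ₁1)).add ?_
    · exact isPinched_of_mem_Icc hσ₁0 (div_nonneg hγ_num hΓ₃.le)
        (mul_div_le_div_of_le_div hγ_den hΓ₃.le hσ₁γ) fun t => gam_mem_Icc hΓ₃.ne' t.2
    · exact isPinched_integral_mul zero_le_one hσ₁0 (div_nonneg hK_num hΓα.le)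
        (mul_div_le_div_of_le_div hK_den hΓα.le hσ₁K) (fun t => measurable_Kker α η β t)
        (fun t => Kker_mem_Icc hα1.le hα2 hη0.le hη1.le t.2.2) hF fun s hs => hf0 s hs _
  exact hTu.mul_norm_le hσ₁0 t

/-- Cone invariance, Case 1: if `β > max{β_K, β_γ}` then `T` maps
`P_{σ₁} ∩ closure(Ω_ρ)` into the cone
`P_{σ₁} = {u : min_{[0,1]} u ≥ σ₁‖u‖_∞}`, where
`σ₁ = min{σ_{1,γ}, c_{1,K}, 1}`. -/
theorem stmt_13
    (α η β : ℝ) (hα1 : 1 < α) (hα2 : α ≤ 2) (hη0 : 0 < η) (hη1 : η < 1) (hβ0 : 0 < β)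
    (f : ℝ → ℝ → ℝ)
    (hf : ContinuousOn (fun p : ℝ × ℝ => f p.1 p.2) (Set.Icc (0:ℝ) 1 ×ˢ Set.univ))
    (hf0 : ∀ t ∈ Set.Icc (0:ℝ) 1, ∀ x : ℝ, 0 ≤ f t x)
    (H₁ H₂ : CI → ℝ) (hH₁c : Continuous H₁) (hH₂c : Continuous H₂)
    (hH₁0 : ∀ u, 0 ≤ H₁ u) (hH₂0 : ∀ u, 0 ≤ H₂ u)
    (hH₁b : ∀ S : Set CI, Bornology.IsBounded S → Bornology.IsBounded (H₁ '' S))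
    (hH₂b : ∀ S : Set CI, Bornology.IsBounded S → Bornology.IsBounded (H₂ '' S))
    (T : CI → CI)
    (hT : ∀ (u : CI) (t : Set.Icc (0:ℝ) 1), T u t = H₁ u * gam α η β (t : ℝ) + H₂ u +
      ∫ s in (0:ℝ)..1, Kker α η β (t : ℝ) s * f s (Set.IccExtend zero_le_one u s))
    (hβ : max ((1 - η) ^ (α - 1) / Real.Gamma α) ((1 - η) * Real.Gamma (3 - α)) < β)
    (ρ : ℝ) (hρ : 0 < ρ)
    (σ₁ : ℝ)
    (hσ₁ : σ₁ = min ((β + (η - 1) * Real.Gamma (3 - α)) / (β + η * Real.Gamma (3 - α)))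
      (min ((β * Real.Gamma α - (1 - η) ^ (α - 1)) / (β * Real.Gamma α + η ^ (α - 1))) 1)) :
    ∀ u : CI, (∀ t, σ₁ * ‖u‖ ≤ u t) → ‖u‖ ≤ ρ → ∀ t, σ₁ * ‖T u‖ ≤ T u t :=
  stmt_13_general α η β hα1 hα2 hη0 hη1 f hf hf0 H₁ H₂ hH₁0 hH₂0 T hT hβ ρ σ₁ hσ₁
end

section
/- (Growth estimate, Case 1) Suppose β > max{β_K, β_γ} and let ρ > 0. Set σ₁ = min{σ_{1,γ}, c_{1,K}, 1}, where c_{1,K} = (βΓ(α) − (1−η)^{α−1})/(βΓ(α) + η^{α−1}) and σ_{1,γ} = (β + (η−1)Γ(3−α))/(β + ηΓ(3−α)). Assume there exist a continuous δ : [0,1] → [0,∞) with f(t,u) ≥ δ(t) for all (t,u) ∈ [0,1]×[σ₁ρ, ρ], and constants η₁, η₂ ≥ 0 with H₁[u] ≥ η₁ and H₂[u] ≥ η₂ for every u ∈ C([0,1],ℝ) with min_{t∈[0,1]} u(t) ≥ σ₁‖u‖_∞ and ‖u‖_∞ = ρ. Then for every such u one has ‖T(u)‖_∞ ≥ η₁·γ(0)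 + η₂ + ∫₀¹ K(0,s)δ(s) ds. -/
open Set MeasureTheory

/-
Evaluate `T u` at `t = 0`. There `K(0, s) = β + (η − s)₊^{α−1}/Γ(α)` is continuous and
nonnegative on `[0, 1]` and `γ(0) ≥ 0`. Since `u` lies in the cone, `σ₁ρ ≤ u(s) ≤ ρ`, so
`f(s, u(s)) ≥ δ(s)`; together with `H₁[u] ≥ η₁` and `H₂[u] ≥ η₂` this bounds `T(u)(0)`, and hence
`‖T(u)‖_∞ ≥ T(u)(0)`, from below term by term.
-/

lemma Kker_zero_eq {α : ℝ} (hα : 1 < α) (η β : ℝ) {s : ℝ} (hs : 0 ≤ s) :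
    Kker α η β 0 s = β + max (η - s) 0 ^ (α - 1) / Real.Gamma α := by
  have hα0 : α - 1 ≠ 0 := by linarith
  have h_at_zero : (Icc (0:ℝ) 0).indicator (fun x => (0 - x) ^ (α - 1) / Real.Gamma α) s = 0 := by
    by_cases hs0 : s ∈ Icc (0:ℝ) 0
    · simp [le_antisymm hs0.2 hs0.1, Real.zero_rpow hα0]
    · exact indicator_of_notMem hs0 _
  rw [Kker, h_at_zero, sub_zero]
  by_cases hsη : s ≤ η
  · rw [indicator_of_mem (show s ∈ Icc 0 η from ⟨hs, hsη⟩), max_eq_left (by linarith)]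
  · rw [indicator_of_notMem (fun h => hsη h.2), max_eq_right (by linarith),
      Real.zero_rpow hα0, zero_div]

lemma continuousOn_Kker_zero {α : ℝ} (hα : 1 < α) (η β : ℝ) :
    ContinuousOn (Kker α η β 0) (Ici 0) := by
  have hcont : Continuous fun s : ℝ => β + max (η - s) 0 ^ (α - 1) / Real.Gamma α :=
    continuous_const.add
      (((Real.continuous_rpow_const (by linarith)).comp
        ((continuous_const.sub continuous_id).max continuous_const)).div_const _)
  exact hcont.continuousOn.congr fun s hs => Kker_zero_eq hα η β hs

lemma Kker_zero_nonneg {α : ℝ} (hα : 1 < α) (η : ℝ) {β : ℝ} (hβ : 0 ≤ β) {s : ℝ}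
    (hs : 0 ≤ s) : 0 ≤ Kker α η β 0 s := by
  rw [Kker_zero_eq hα η β hs]
  positivity

lemma gam_zero_nonneg {α η β : ℝ} (hα : α < 3) (hη : 0 ≤ η) (hβ : 0 ≤ β) :
    0 ≤ gam α η β 0 := by
  have hΓ : 0 < Real.Gamma (3 - α) := Real.Gamma_pos_of_pos (by linarith)
  have : 0 ≤ β / Real.Gamma (3 - α) := div_nonneg hβ hΓ.le
  rw [gam]
  linarith

lemma integral_Kker_zero_mul_mono {α : ℝ} (hα : 1 < α) (η : ℝ) {β : ℝ} (hβ : 0 ≤ β)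
    {g h : ℝ → ℝ} (hg : ContinuousOn g (Icc 0 1)) (hh : ContinuousOn h (Icc 0 1))
    (hgh : ∀ s ∈ Icc (0:ℝ) 1, g s ≤ h s) :
    ∫ s in (0:ℝ)..1, Kker α η β 0 s * g s ≤ ∫ s in (0:ℝ)..1, Kker α η β 0 s * h s := by
  have hK : ContinuousOn (Kker α η β 0) (Icc 0 1) :=
    (continuousOn_Kker_zero hα η β).mono Icc_subset_Ici_self
  refine intervalIntegral.integral_mono_on zero_le_one
    ((hK.mul hg).intervalIntegrable_of_Icc zero_le_one)
    ((hK.mul hh).intervalIntegrable_of_Icc zero_le_one) fun s hs => ?_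
  exact mul_le_mul_of_nonneg_left (hgh s hs) (Kker_zero_nonneg hα η hβ hs.1)

theorem stmt_15_general
    (α η β : ℝ) (hα1 : 1 < α) (hα2 : α ≤ 2) (hη0 : 0 < η) (hβ0 : 0 < β)
    (f : ℝ → ℝ → ℝ)
    (hf : ContinuousOn (fun p : ℝ × ℝ => f p.1 p.2) (Set.Icc (0:ℝ) 1 ×ˢ Set.univ))
    (H₁ H₂ : CI → ℝ)
    (T : CI → CI)
    (hT : ∀ (u : CI) (t : Set.Icc (0:ℝ) 1), T u t = H₁ u * gam α η β (t : ℝ) + H₂ u +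
      ∫ s in (0:ℝ)..1, Kker α η β (t : ℝ) s * f s (Set.IccExtend zero_le_one u s))
    (ρ : ℝ)
    (σ₁ : ℝ)
    (δ : ℝ → ℝ) (hδc : ContinuousOn δ (Set.Icc (0:ℝ) 1))
    (hfδ : ∀ t ∈ Set.Icc (0:ℝ) 1, ∀ x ∈ Set.Icc (σ₁ * ρ) ρ, δ t ≤ f t x)
    (η₁ η₂ : ℝ)
    (hH : ∀ u : CI, (∀ t, σ₁ * ‖u‖ ≤ u t) → ‖u‖ = ρ → η₁ ≤ H₁ u ∧ η₂ ≤ H₂ u) :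
    ∀ u : CI, (∀ t, σ₁ * ‖u‖ ≤ u t) → ‖u‖ = ρ →
      η₁ * gam α η β 0 + η₂ + (∫ s in (0:ℝ)..1, Kker α η β 0 s * δ s) ≤ ‖T u‖ := by
  intro u hu hρu
  obtain ⟨hη₁, hη₂⟩ := hH u hu hρu
  have hfu : ContinuousOn (fun s => f s (IccExtend zero_le_one u s)) (Icc 0 1) :=
    hf.comp (continuous_id.prodMk (u.continuous.comp continuous_projIcc)).continuousOn
      fun s hs => ⟨hs, mem_univ _⟩
  have hδ_le : ∀ s ∈ Icc (0:ℝ) 1, δ s ≤ f s (IccExtend zero_le_one u s) := fun s hs =>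
    hfδ s hs _ ⟨hρu ▸ hu _, hρu ▸ u.apply_le_norm _⟩
  have hγ : η₁ * gam α η β 0 ≤ H₁ u * gam α η β 0 :=
    mul_le_mul_of_nonneg_right hη₁ (gam_zero_nonneg (by linarith) hη0.le hβ0.le)
  have hK := integral_Kker_zero_mul_mono hα1 η hβ0.le hδc hfu hδ_le
  calc η₁ * gam α η β 0 + η₂ + (∫ s in (0:ℝ)..1, Kker α η β 0 s * δ s)
      ≤ T u ⟨0, left_mem_Icc.2 zero_le_one⟩ := by rw [hT]; linarith
    _ ≤ ‖T u‖ := (T u).apply_le_norm _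

/-- Growth estimate, Case 1: if `β > max{β_K, β_γ}`,
`f ≥ δ` on `[0,1]×[σ₁ρ,ρ]`, and `H₁ ≥ η₁`, `H₂ ≥ η₂` on `P_{σ₁} ∩ ∂Ω_ρ`, then for every
`u ∈ P_{σ₁}` with `‖u‖_∞ = ρ` one has
`‖T(u)‖_∞ ≥ η₁·γ(0) + η₂ + ∫₀¹ K(0,s)δ(s) ds`. -/
theorem stmt_15
    (α η β : ℝ) (hα1 : 1 < α) (hα2 : α ≤ 2) (hη0 : 0 < η) (hη1 : η < 1) (hβ0 : 0 < β)
    (f : ℝ → ℝ → ℝ)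
    (hf : ContinuousOn (fun p : ℝ × ℝ => f p.1 p.2) (Set.Icc (0:ℝ) 1 ×ˢ Set.univ))
    (hf0 : ∀ t ∈ Set.Icc (0:ℝ) 1, ∀ x : ℝ, 0 ≤ f t x)
    (H₁ H₂ : CI → ℝ) (hH₁c : Continuous H₁) (hH₂c : Continuous H₂)
    (hH₁0 : ∀ u, 0 ≤ H₁ u) (hH₂0 : ∀ u, 0 ≤ H₂ u)
    (hH₁b : ∀ S : Set CI, Bornology.IsBounded S → Bornology.IsBounded (H₁ '' S))
    (hH₂b : ∀ S : Set CI, Bornology.IsBounded S → Bornology.IsBounded (H₂ '' S))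
    (T : CI → CI)
    (hT : ∀ (u : CI) (t : Set.Icc (0:ℝ) 1), T u t = H₁ u * gam α η β (t : ℝ) + H₂ u +
      ∫ s in (0:ℝ)..1, Kker α η β (t : ℝ) s * f s (Set.IccExtend zero_le_one u s))
    (hβ : max ((1 - η) ^ (α - 1) / Real.Gamma α) ((1 - η) * Real.Gamma (3 - α)) < β)
    (ρ : ℝ) (hρ : 0 < ρ)
    (σ₁ : ℝ)
    (hσ₁ : σ₁ = min ((β + (η - 1) * Real.Gamma (3 - α)) / (β + η * Real.Gamma (3 - α)))
      (min ((β * Real.Gamma α - (1 - η) ^ (α - 1)) / (β * Real.Gamma α + η ^ (α - 1))) 1))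
    (δ : ℝ → ℝ) (hδc : ContinuousOn δ (Set.Icc (0:ℝ) 1))
    (hδ0 : ∀ t ∈ Set.Icc (0:ℝ) 1, 0 ≤ δ t)
    (hfδ : ∀ t ∈ Set.Icc (0:ℝ) 1, ∀ x ∈ Set.Icc (σ₁ * ρ) ρ, δ t ≤ f t x)
    (η₁ η₂ : ℝ) (hη₁ : 0 ≤ η₁) (hη₂ : 0 ≤ η₂)
    (hH : ∀ u : CI, (∀ t, σ₁ * ‖u‖ ≤ u t) → ‖u‖ = ρ → η₁ ≤ H₁ u ∧ η₂ ≤ H₂ u) :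
    ∀ u : CI, (∀ t, σ₁ * ‖u‖ ≤ u t) → ‖u‖ = ρ →
      η₁ * gam α η β 0 + η₂ + (∫ s in (0:ℝ)..1, Kker α η β 0 s * δ s) ≤ ‖T u‖ :=
  stmt_15_general α η β hα1 hα2 hη0 hβ0 f hf H₁ H₂ T hT ρ σ₁ δ hδc hfδ η₁ η₂ hH
end
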